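/- arXiv:0811.3182 — 10 statements merged into one kernel-verified Lean document; each statement's English description precedes it below -/
import Mathlib

section
/- Assume each g_i is nonzero and condition (A1) holds. Then Θ̃ is a linear subspace of the space of real sequences and N is a norm on it: for c, d ∈ Θ̃ and λ ∈ ℝ one has c + d ∈ Θ̃ with N(c+d) ≤ N(c) + N(d), λ·c ∈ Θ̃ with N(λ·c) = |λ|·N(c), and N(c) = 0 implies c = 0. -/
noncomputable section

open Set

/-- `M^c`: the set of `f ∈ X` with `|c i| ≤ |g i (f)|` for all `i`. -/
def MSet {X : Type*} [NormedAddCommGroup X] [NormedSpace ℝ X]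
    (g : ℕ → X →L[ℝ] ℝ) (c : ℕ → ℝ) : Set X :=
  {f | ∀ i, |c i| ≤ |g i f|}

/-- `Θ̃`: the set of scalar sequences `c` with `M^c ≠ ∅`. -/
def ThetaT {X : Type*} [NormedAddCommGroup X] [NormedSpace ℝ X]
    (g : ℕ → X →L[ℝ] ℝ) : Set (ℕ → ℝ) :=
  {c | (MSet g c).Nonempty}

/-- `N(c) = inf{‖f‖ : f ∈ M^c}`. -/
def NN {X : Type*} [NormedAddCommGroup X] [NormedSpace ℝ X]
    (g : ℕ → X →L[ℝ] ℝ) (c : ℕ → ℝ) : ℝ :=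
  sInf ((fun f => ‖f‖) '' MSet g c)

theorem thetaT_subspace_and_norm
    {X : Type*} [NormedAddCommGroup X] [NormedSpace ℝ X] [CompleteSpace X]
    (g : ℕ → X →L[ℝ] ℝ) (hg : ∀ i, g i ≠ 0)
    (hA1 : ∀ c ∈ ThetaT g, ∀ d ∈ ThetaT g, ∀ f ∈ MSet g c, ∀ h ∈ MSet g d,
      ∃ r ∈ MSet g (c + d), ‖r‖ ≤ ‖f‖ + ‖h‖) :
    (0 : ℕ → ℝ) ∈ ThetaT g ∧
    (∀ c ∈ ThetaT g, ∀ d ∈ ThetaT g,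
      c + d ∈ ThetaT g ∧ NN g (c + d) ≤ NN g c + NN g d) ∧
    (∀ c ∈ ThetaT g, ∀ l : ℝ,
      l • c ∈ ThetaT g ∧ NN g (l • c) = |l| * NN g c) ∧
    (∀ c ∈ ThetaT g, NN g c = 0 → c = 0) := by
  classical
  have bdd : ∀ c : ℕ → ℝ, BddBelow ((fun f : X => ‖f‖) '' MSet g c) := by
    intro c
    refine ⟨0, ?_⟩
    rintro a ⟨f, -, rfl⟩
    exact norm_nonneg f
  have hzero : (0 : X) ∈ MSet g (0 : ℕ → ℝ) := by
    intro i; simp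
  have h0T : (0 : ℕ → ℝ) ∈ ThetaT g := ⟨0, hzero⟩
  have NN_le : ∀ (c : ℕ → ℝ) (f : X), f ∈ MSet g c → NN g c ≤ ‖f‖ := by
    intro c f hf
    exact csInf_le (bdd c) ⟨f, hf, rfl⟩
  have NN_nonneg : ∀ c ∈ ThetaT g, 0 ≤ NN g c := by
    rintro c ⟨f, hf⟩
    refine le_csInf ⟨‖f‖, f, hf, rfl⟩ ?_
    rintro a ⟨f', -, rfl⟩
    exact norm_nonneg f'
  have hmemscale : ∀ (c : ℕ → ℝ) (l : ℝ) (f : X), f ∈ MSet g c →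
      l • f ∈ MSet g (l • c) := by
    intro c l f hf i
    have h1 : |(l • c) i| = |l| * |c i| := by
      simp [abs_mul]
    have h2 : |(g i) (l • f)| = |l| * |(g i) f| := by
      rw [map_smul]
      simp [abs_mul]
    rw [h1, h2]
    exact mul_le_mul_of_nonneg_left (hf i) (abs_nonneg l)
  have hle : ∀ c ∈ ThetaT g, ∀ l : ℝ,
      l • c ∈ ThetaT g ∧ NN g (l • c) ≤ |l| * NN g c := by
    rintro c ⟨f0, hf0⟩ l
    have hmemT : l • c ∈ ThetaT g := ⟨l • f0, hmemscale c l f0 hf0⟩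
    refine ⟨hmemT, ?_⟩
    rcases eq_or_ne l 0 with rfl | hl
    · have h1 : NN g ((0:ℝ) • c) ≤ ‖((0:ℝ) • f0 : X)‖ :=
        NN_le _ _ (hmemscale c 0 f0 hf0)
      simpa using h1
    · have hlpos : 0 < |l| := abs_pos.mpr hl
      rw [← div_le_iff₀' hlpos]
      refine le_csInf ⟨‖f0‖, f0, hf0, rfl⟩ ?_
      rintro a ⟨f, hf, rfl⟩
      rw [div_le_iff₀ hlpos]
      calc NN g (l • c) ≤ ‖(l • f : X)‖ := NN_le _ _ (hmemscale c l f hf)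
        _ = ‖f‖ * |l| := by rw [norm_smul, Real.norm_eq_abs, mul_comm]
  refine ⟨h0T, ?_, ?_, ?_⟩
  · -- additivity
    rintro c hc d hd
    obtain ⟨f0, hf0⟩ := hc
    obtain ⟨h0, hh0⟩ := hd
    obtain ⟨r0, hr0, -⟩ := hA1 c ⟨f0, hf0⟩ d ⟨h0, hh0⟩ f0 hf0 h0 hh0
    refine ⟨⟨r0, hr0⟩, ?_⟩
    rw [← sub_le_iff_le_add']
    refine le_csInf ⟨‖h0‖, h0, hh0, rfl⟩ ?_
    rintro b ⟨h, hh, rfl⟩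
    rw [sub_le_iff_le_add', ← sub_le_iff_le_add]
    refine le_csInf ⟨‖f0‖, f0, hf0, rfl⟩ ?_
    rintro a ⟨f, hf, rfl⟩
    rw [sub_le_iff_le_add]
    obtain ⟨r, hrmem, hrle⟩ := hA1 c ⟨f0, hf0⟩ d ⟨h0, hh0⟩ f hf h hh
    calc NN g (c + d) ≤ ‖r‖ := NN_le _ _ hrmem
      _ ≤ ‖f‖ + ‖h‖ := hrle
  · -- homogeneity
    intro c hc l
    obtain ⟨hmemT, hle1⟩ := hle c hc l
    refine ⟨hmemT, le_antisymm hle1 ?_⟩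
    rcases eq_or_ne l 0 with rfl | hl
    · simpa using NN_nonneg _ hmemT
    · have h2 := (hle (l • c) hmemT l⁻¹).2
      have hinv : l⁻¹ • (l • c) = c := by
        rw [smul_smul, inv_mul_cancel₀ hl, one_smul]
      rw [hinv] at h2
      have hlpos : 0 < |l| := abs_pos.mpr hl
      have := mul_le_mul_of_nonneg_left h2 (le_of_lt hlpos)
      calc |l| * NN g c ≤ |l| * (|l⁻¹| * NN g (l • c)) := this
        _ = NN g (l • c) := by
          rw [abs_inv, ← mul_assoc, mul_inv_cancel₀ (ne_of_gt hlpos), one_mul]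
  · -- definiteness
    rintro c hc hN
    by_contra hne
    obtain ⟨i, hi⟩ : ∃ i, c i ≠ 0 := by
      by_contra h
      push_neg at h
      exact hne (funext h)
    obtain ⟨f0, hf0⟩ := hc
    have hgpos : 0 < ‖g i‖ := norm_pos_iff.mpr (hg i)
    have hlow : |c i| / ‖g i‖ ≤ NN g c := by
      refine le_csInf ⟨‖f0‖, f0, hf0, rfl⟩ ?_
      rintro a ⟨f, hf, rfl⟩
      rw [div_le_iff₀ hgpos, mul_comm]
      calc |c i| ≤ |(g i) f| := hf i
        _ ≤ ‖g i‖ * ‖f‖ := by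
          rw [← Real.norm_eq_abs]
          exact (g i).le_opNorm f
    have hpos : 0 < |c i| / ‖g i‖ := div_pos (abs_pos.mpr hi) hgpos
    linarith
end
end

section
/- Assume X is reflexive, each g_i is nonzero, and condition (A1) holds. Then (Θ̃, N) is complete: if (c^ν)_{ν∈ℕ} is a sequence in Θ̃ such that for every ε > 0 there is ν₀ with c^μ − c^ν ∈ Θ̃ and N(c^μ − c^ν) < ε for all μ, ν ≥ ν₀, then there exists c ∈ Θ̃ with c − c^ν ∈ Θ̃ for large ν and N(c − c^ν) → 0 as ν → ∞. -/
/-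
Each coordinate `c ↦ c i` is bounded by `‖g i‖ * N(c)`, so a Cauchy sequence `c^ν` converges
pointwise to some `c`. For `ε > 0` pass to a subsequence `c^{m k}` whose consecutive gaps have
`N < ε / 2^(k+2)`; chaining (A1) along it produces, for each `ν` large, elements of
`M^{c^{m K} - c^ν}` of norm `< ε` for all `K`. In the reflexive space `X` these have a weak
cluster point `f` (Banach–Alaoglu in `X** = X`), and since the constraints `|d i| ≤ |g i (f)|` pass
to weak limits, `f ∈ M^{c - c^ν}` with `‖f‖ ≤ ε`.
-/

noncomputable section

open Set

open Filter Topology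

theorem NormedSpace.exists_forall_tendsto_of_surjective_inclusionInDoubleDual
    {X : Type*} [NormedAddCommGroup X] [NormedSpace ℝ X]
    (hrefl : Function.Surjective (NormedSpace.inclusionInDoubleDual ℝ X))
    {ι : Type*} (U : Ultrafilter ι) {r : ι → X} {R : ℝ} (hR : ∀ K, ‖r K‖ ≤ R) :
    ∃ f : X, ‖f‖ ≤ R ∧ ∀ ψ : StrongDual ℝ X, Tendsto (fun K => ψ (r K)) U (𝓝 (ψ f)) := by
  have hball : ∀ x : X,
      NormedSpace.inclusionInDoubleDual ℝ X x ∈ Metric.closedBall 0 R ↔ ‖x‖ ≤ R := fun x => by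
    rw [← (NormedSpace.inclusionInDoubleDualLi (𝕜 := ℝ) (E := X)).norm_map x]
    exact mem_closedBall_zero_iff (E := StrongDual ℝ (StrongDual ℝ X))
  let φ : ι → WeakDual ℝ (StrongDual ℝ X) :=
    fun K => StrongDual.toWeakDual (NormedSpace.inclusionInDoubleDual ℝ X (r K))
  obtain ⟨F, hF, hUF⟩ := (WeakDual.isCompact_closedBall (𝕜 := ℝ) 0 R).ultrafilter_le_nhds
    (U.map φ) (le_principal_iff.2 (mem_map.2 (univ_mem' fun K => (hball _).2 (hR K))))
  obtain ⟨f, rfl⟩ := hrefl (WeakDual.toStrongDual F)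
  exact ⟨f, (hball f).1 hF, fun ψ => ((WeakDual.eval_continuous ψ).tendsto _).comp hUF⟩

/-- Condition (A1). -/
def ConditionA1 {X : Type*} [NormedAddCommGroup X] [NormedSpace ℝ X]
    (g : ℕ → X →L[ℝ] ℝ) : Prop :=
  ∀ c ∈ ThetaT g, ∀ d ∈ ThetaT g, ∀ f ∈ MSet g c, ∀ h ∈ MSet g d,
    ∃ r ∈ MSet g (c + d), ‖r‖ ≤ ‖f‖ + ‖h‖

/-- Cauchy sequences of the space `(Θ̃, N)`. -/
def NNCauchy {X : Type*} [NormedAddCommGroup X] [NormedSpace ℝ X]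
    (g : ℕ → X →L[ℝ] ℝ) (cs : ℕ → ℕ → ℝ) : Prop :=
  ∀ ε > 0, ∃ ν₀ : ℕ, ∀ μ ≥ ν₀, ∀ ν ≥ ν₀, cs μ - cs ν ∈ ThetaT g ∧ NN g (cs μ - cs ν) < ε

section

variable {X : Type*} [NormedAddCommGroup X] [NormedSpace ℝ X] {g : ℕ → X →L[ℝ] ℝ}

theorem NN_le_norm {c : ℕ → ℝ} {f : X} (hf : f ∈ MSet g c) : NN g c ≤ ‖f‖ :=
  csInf_le ⟨0, by rintro _ ⟨x, -, rfl⟩; exact norm_nonneg x⟩ ⟨f, hf, rfl⟩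

theorem exists_mem_MSet_norm_lt {c : ℕ → ℝ} {ε : ℝ} (hc : c ∈ ThetaT g) (h : NN g c < ε) :
    ∃ f ∈ MSet g c, ‖f‖ < ε := by
  obtain ⟨_, ⟨f, hf, rfl⟩, hfε⟩ := exists_lt_of_csInf_lt (hc.image _) h
  exact ⟨f, hf, hfε⟩

theorem abs_apply_le_norm_mul_NN {c : ℕ → ℝ} (hc : c ∈ ThetaT g) (i : ℕ) :
    |c i| ≤ ‖g i‖ * NN g c := by
  rw [NN, ← smul_eq_mul, ← Real.sInf_smul_of_nonneg (norm_nonneg _)]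
  refine le_csInf (hc.image _).smul_set ?_
  rintro _ ⟨_, ⟨f, hf, rfl⟩, rfl⟩
  exact (hf i).trans ((g i).le_opNorm f)

theorem NNCauchy.exists_tendsto {cs : ℕ → ℕ → ℝ} (hcs : NNCauchy g cs) :
    ∃ c, Tendsto cs atTop (𝓝 c) := by
  refine cauchySeq_tendsto_of_complete ((cauchy_pi_iff' _).2 fun i => ?_)
  change CauchySeq fun ν => cs ν i
  refine Metric.cauchySeq_iff'.2 fun δ hδ => ?_
  obtain ⟨ν₀, h⟩ := hcs (δ / (‖g i‖ + 1)) (by positivity)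
  refine ⟨ν₀, fun ν hν => ?_⟩
  obtain ⟨hmem, hN⟩ := h ν hν ν₀ le_rfl
  calc dist (cs ν i) (cs ν₀ i) = |(cs ν - cs ν₀) i| := rfl
    _ ≤ ‖g i‖ * NN g (cs ν - cs ν₀) := abs_apply_le_norm_mul_NN hmem i
    _ ≤ ‖g i‖ * (δ / (‖g i‖ + 1)) := by gcongr
    _ < δ := by
      rw [mul_div_left_comm]
      exact mul_lt_of_lt_one_right hδ ((div_lt_one (by positivity)).2 (lt_add_one _))

theorem ConditionA1.add_mem (hA1 : ConditionA1 g) {c d : ℕ → ℝ} (hc : c ∈ ThetaT g)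
    (hd : d ∈ ThetaT g) : c + d ∈ ThetaT g :=
  let ⟨f, hf⟩ := hc
  let ⟨h, hh⟩ := hd
  let ⟨r, hr, _⟩ := hA1 c hc d hd f hf h hh
  ⟨r, hr⟩

theorem ConditionA1.exists_mem_MSet_norm_lt_add_sum (hA1 : ConditionA1 g) {d : ℕ → ℕ → ℝ}
    {B : ℝ} {δ : ℕ → ℝ} (h0 : d 0 ∈ ThetaT g) (hB : NN g (d 0) < B)
    (hstep : ∀ k, d (k + 1) - d k ∈ ThetaT g ∧ NN g (d (k + 1) - d k) < δ k) (K : ℕ) :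
    ∃ x ∈ MSet g (d K), ‖x‖ < B + ∑ k ∈ Finset.range K, δ k := by
  induction K with
  | zero => simpa using exists_mem_MSet_norm_lt h0 hB
  | succ K ih =>
    obtain ⟨x, hx, hxB⟩ := ih
    obtain ⟨y, hy, hyδ⟩ := exists_mem_MSet_norm_lt (hstep K).1 (hstep K).2
    obtain ⟨r, hr, hrxy⟩ := hA1 _ ⟨y, hy⟩ _ ⟨x, hx⟩ y hy x hx
    refine ⟨r, by simpa using hr, ?_⟩
    rw [Finset.sum_range_succ]
    linarith

theorem exists_mem_MSet_norm_le_of_tendsto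
    (hrefl : Function.Surjective (NormedSpace.inclusionInDoubleDual ℝ X))
    {ι : Type*} {l : Filter ι} [l.NeBot] {d : ι → ℕ → ℝ} {c : ℕ → ℝ} (hd : Tendsto d l (𝓝 c))
    {r : ι → X} (hr : ∀ K, r K ∈ MSet g (d K)) {R : ℝ} (hR : ∀ K, ‖r K‖ ≤ R) :
    ∃ f ∈ MSet g c, ‖f‖ ≤ R := by
  let U := Ultrafilter.of l
  obtain ⟨f, hfR, hf⟩ :=
    NormedSpace.exists_forall_tendsto_of_surjective_inclusionInDoubleDual hrefl U hR
  refine ⟨f, fun i => ?_, hfR⟩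
  have hdi : Tendsto (fun K => |d K i|) U (𝓝 |c i|) :=
    (((continuous_apply i).tendsto c).comp hd).abs.mono_left (Ultrafilter.of_le l)
  exact le_of_tendsto_of_tendsto' hdi (hf (g i)).abs fun K => hr K i

theorem NNCauchy.exists_mem_MSet_sub_norm_le
    (hrefl : Function.Surjective (NormedSpace.inclusionInDoubleDual ℝ X))
    (hA1 : ConditionA1 g) {cs : ℕ → ℕ → ℝ} (hcs : NNCauchy g cs) {c : ℕ → ℝ}
    (hc : Tendsto cs atTop (𝓝 c)) {ε : ℝ} (hε : 0 < ε) :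
    ∃ ν₀ : ℕ, ∀ ν ≥ ν₀, ∃ f ∈ MSet g (c - cs ν), ‖f‖ ≤ ε := by
  obtain ⟨ν₀, hν₀⟩ := hcs (ε / 2) (by positivity)
  choose a ha using fun k : ℕ => hcs (ε / 4 * (1 / 2) ^ k) (by positivity)
  obtain ⟨m, hm, hma⟩ := extraction_forall_of_eventually' (P := fun k n => ν₀ ≤ n ∧ a k ≤ n)
    fun k => ⟨max ν₀ (a k), fun n hn => ⟨le_of_max_le_left hn, le_of_max_le_right hn⟩⟩
  refine ⟨ν₀, fun ν hν => ?_⟩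
  have hstep : ∀ k, (cs (m (k + 1)) - cs ν) - (cs (m k) - cs ν) ∈ ThetaT g ∧
      NN g ((cs (m (k + 1)) - cs ν) - (cs (m k) - cs ν)) < ε / 4 * (1 / 2) ^ k := fun k => by
    rw [sub_sub_sub_cancel_right]
    exact ha k _ ((hma k).2.trans (hm.monotone k.le_succ)) _ (hma k).2
  choose r hr hrε using fun K => hA1.exists_mem_MSet_norm_lt_add_sum
    (d := fun K => cs (m K) - cs ν) (hν₀ _ (hma 0).1 ν hν).1 (hν₀ _ (hma 0).1 ν hν).2 hstep K
  refine exists_mem_MSet_norm_le_of_tendsto hrefl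
    ((hc.comp hm.tendsto_atTop).sub_const (cs ν)) hr fun K => (hrε K).le.trans ?_
  calc ε / 2 + ∑ k ∈ Finset.range K, ε / 4 * (1 / 2) ^ k
      = ε / 2 + ε / 4 * ∑ k ∈ Finset.range K, (1 / 2 : ℝ) ^ k := by rw [Finset.mul_sum]
    _ ≤ ε / 2 + ε / 4 * 2 := by gcongr; exact sum_geometric_two_le K
    _ = ε := by ring

end

theorem thetaT_complete_general
    {X : Type*} [NormedAddCommGroup X] [NormedSpace ℝ X]
    (hrefl : Function.Surjective (NormedSpace.inclusionInDoubleDual ℝ X))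
    (g : ℕ → X →L[ℝ] ℝ)
    (hA1 : ∀ c ∈ ThetaT g, ∀ d ∈ ThetaT g, ∀ f ∈ MSet g c, ∀ h ∈ MSet g d,
      ∃ r ∈ MSet g (c + d), ‖r‖ ≤ ‖f‖ + ‖h‖)
    (cs : ℕ → ℕ → ℝ) (hcs : ∀ ν, cs ν ∈ ThetaT g)
    (hcauchy : ∀ ε > 0, ∃ ν₀ : ℕ, ∀ μ ≥ ν₀, ∀ ν ≥ ν₀,
      cs μ - cs ν ∈ ThetaT g ∧ NN g (cs μ - cs ν) < ε) :
    ∃ c ∈ ThetaT g, ∀ ε > 0, ∃ ν₀ : ℕ, ∀ ν ≥ ν₀,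
      c - cs ν ∈ ThetaT g ∧ NN g (c - cs ν) < ε := by
  obtain ⟨c, hc⟩ := NNCauchy.exists_tendsto (g := g) hcauchy
  have hclose := fun ε (hε : 0 < ε) =>
    NNCauchy.exists_mem_MSet_sub_norm_le hrefl hA1 hcauchy hc hε
  refine ⟨c, ?_, fun ε hε => ?_⟩
  · obtain ⟨ν₀, h⟩ := hclose 1 one_pos
    obtain ⟨f, hf, -⟩ := h ν₀ le_rfl
    simpa using ConditionA1.add_mem hA1 ⟨f, hf⟩ (hcs ν₀)
  · obtain ⟨ν₀, h⟩ := hclose (ε / 2) (half_pos hε)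
    refine ⟨ν₀, fun ν hν => ?_⟩
    obtain ⟨f, hf, hfε⟩ := h ν hν
    exact ⟨⟨f, hf⟩, (NN_le_norm hf).trans_lt (hfε.trans_lt (half_lt_self hε))⟩

theorem thetaT_complete
    {X : Type*} [NormedAddCommGroup X] [NormedSpace ℝ X] [CompleteSpace X]
    (hrefl : Function.Surjective (NormedSpace.inclusionInDoubleDual ℝ X))
    (g : ℕ → X →L[ℝ] ℝ) (hg : ∀ i, g i ≠ 0)
    (hA1 : ∀ c ∈ ThetaT g, ∀ d ∈ ThetaT g, ∀ f ∈ MSet g c, ∀ h ∈ MSet g d,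
      ∃ r ∈ MSet g (c + d), ‖r‖ ≤ ‖f‖ + ‖h‖)
    (cs : ℕ → ℕ → ℝ) (hcs : ∀ ν, cs ν ∈ ThetaT g)
    (hcauchy : ∀ ε > 0, ∃ ν₀ : ℕ, ∀ μ ≥ ν₀, ∀ ν ≥ ν₀,
      cs μ - cs ν ∈ ThetaT g ∧ NN g (cs μ - cs ν) < ε) :
    ∃ c ∈ ThetaT g, ∀ ε > 0, ∃ ν₀ : ℕ, ∀ ν ≥ ν₀,
      c - cs ν ∈ ThetaT g ∧ NN g (c - cs ν) < ε :=
  thetaT_complete_general hrefl g hA1 cs hcs hcauchy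
end
end

section
/- The lower frame inequality with respect to Θ̃ is equivalent to condition (A3): there exists A ∈ (0,1] such that A·‖f‖ ≤ N({g_i(f)}_{i∈ℕ}) for all f ∈ X if and only if there exists A ∈ (0,1] such that for all f, f̃ ∈ X with |g_i(f)| ≤ |g_i(f̃)| for all i one has A·‖f‖ ≤ ‖f̃‖. (Note that for every f ∈ X one has f ∈ M^{{g_i(f)}}, so {g_i(f)} ∈ Θ̃ and N({g_i(f)}) ≤ ‖f‖.) -/
noncomputable section

open Set

theorem lower_frame_iff_A3
    {X : Type*} [NormedAddCommGroup X] [NormedSpace ℝ X] [CompleteSpace X]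
    (g : ℕ → X →L[ℝ] ℝ) :
    (∀ f : X, f ∈ MSet g (fun i => g i f) ∧ (fun i => g i f) ∈ ThetaT g ∧
        NN g (fun i => g i f) ≤ ‖f‖) ∧
    ((∃ A : ℝ, 0 < A ∧ A ≤ 1 ∧ ∀ f : X, A * ‖f‖ ≤ NN g (fun i => g i f)) ↔
      (∃ A : ℝ, 0 < A ∧ A ≤ 1 ∧ ∀ f ftilde : X,
        (∀ i, |g i f| ≤ |g i ftilde|) → A * ‖f‖ ≤ ‖ftilde‖)) := by
  have hmem : ∀ f : X, f ∈ MSet g (fun i => g i f) := fun f i => le_refl _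
  have hbdd : ∀ c : ℕ → ℝ, BddBelow ((fun f : X => ‖f‖) '' MSet g c) := by
    intro c
    exact ⟨0, fun x ⟨f, _, hf⟩ => hf ▸ norm_nonneg f⟩
  constructor
  · intro f
    refine ⟨hmem f, ⟨f, hmem f⟩, csInf_le (hbdd _) (Set.mem_image_of_mem _ (hmem f))⟩
  · constructor
    · rintro ⟨A, hA0, hA1, hA⟩
      refine ⟨A, hA0, hA1, fun f ft hle => ?_⟩
      calc A * ‖f‖ ≤ NN g (fun i => g i f) := hA f
        _ ≤ ‖ft‖ := csInf_le (hbdd _) (Set.mem_image_of_mem _ hle)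
    · rintro ⟨A, hA0, hA1, hA⟩
      refine ⟨A, hA0, hA1, fun f => ?_⟩
      apply le_csInf ⟨‖f‖, Set.mem_image_of_mem _ (hmem f)⟩
      rintro b ⟨ft, hft, rfl⟩
      exact hA f ft hft
end
end

section
/- Let S be a linear subspace of the real sequences with a norm N_Θ which is solid (if c ∈ S and |d_i| ≤ |c_i| for all i then d ∈ S and N_Θ(d) ≤ N_Θ(c)), and let 0 < A ≤ B be such that for every f ∈ X the sequence {g_i(f)}_{i∈ℕ} belongs to S and A·‖f‖ ≤ N_Θ({g_i(f)}) ≤ B·‖f‖. Then the lower frame inequality with respect to Θ̃ holds: (A/B)·‖f‖ ≤ N({g_i(f)}_{i∈ℕ}) for every f ∈ X. -/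
noncomputable section

open Set

section LowerFrame

variable {X : Type*} [NormedAddCommGroup X] [NormedSpace ℝ X] (g : ℕ → X →L[ℝ] ℝ)

theorem mem_MSet_self (f : X) : f ∈ MSet g (fun i => g i f) :=
  fun _ => le_rfl

theorem le_NN_of_forall_le_norm {c : ℕ → ℝ} (hc : (MSet g c).Nonempty) {b : ℝ}
    (hb : ∀ h ∈ MSet g c, b ≤ ‖h‖) : b ≤ NN g c :=
  le_csInf (hc.image _) (forall_mem_image.2 hb)

theorem mul_norm_le_mul_norm_of_mem_MSet {S : Set (ℕ → ℝ)} {NΘ : (ℕ → ℝ) → ℝ}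
    (hsolid : ∀ c ∈ S, ∀ d : ℕ → ℝ, (∀ i, |d i| ≤ |c i|) → d ∈ S ∧ NΘ d ≤ NΘ c)
    {A B : ℝ} (hmem : ∀ f : X, (fun i => g i f) ∈ S)
    (hframe : ∀ f : X, A * ‖f‖ ≤ NΘ (fun i => g i f) ∧ NΘ (fun i => g i f) ≤ B * ‖f‖)
    {f h : X} (hh : h ∈ MSet g (fun i => g i f)) : A * ‖f‖ ≤ B * ‖h‖ :=
  calc A * ‖f‖ ≤ NΘ (fun i => g i f) := (hframe f).1
    _ ≤ NΘ (fun i => g i h) := (hsolid _ (hmem h) _ hh).2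
    _ ≤ B * ‖h‖ := (hframe h).2

end LowerFrame

theorem lower_frame_from_solid_frame_general
    {X : Type*} [NormedAddCommGroup X] [NormedSpace ℝ X]
    (g : ℕ → X →L[ℝ] ℝ)
    (S : Submodule ℝ (ℕ → ℝ)) (NΘ : (ℕ → ℝ) → ℝ)
    -- `S` is solid:
    (hsolid : ∀ c ∈ S, ∀ d : ℕ → ℝ, (∀ i, |d i| ≤ |c i|) → d ∈ S ∧ NΘ d ≤ NΘ c)
    -- frame property with bounds `0 < A ≤ B`:
    (A B : ℝ) (hA : 0 < A) (hAB : A ≤ B)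
    (hmem : ∀ f : X, (fun i => g i f) ∈ S)
    (hframe : ∀ f : X, A * ‖f‖ ≤ NΘ (fun i => g i f) ∧ NΘ (fun i => g i f) ≤ B * ‖f‖) :
    ∀ f : X, (A / B) * ‖f‖ ≤ NN g (fun i => g i f) := by
  intro f
  have hB : 0 < B := hA.trans_le hAB
  refine le_NN_of_forall_le_norm g ⟨f, mem_MSet_self g f⟩ fun h hh => ?_
  rw [div_mul_eq_mul_div, div_le_iff₀ hB, mul_comm ‖h‖ B]
  exact mul_norm_le_mul_norm_of_mem_MSet g hsolid hmem hframe hh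

theorem lower_frame_from_solid_frame
    {X : Type*} [NormedAddCommGroup X] [NormedSpace ℝ X] [CompleteSpace X]
    (g : ℕ → X →L[ℝ] ℝ)
    (S : Submodule ℝ (ℕ → ℝ)) (NΘ : (ℕ → ℝ) → ℝ)
    -- `NΘ` is a norm on `S`:
    (hNadd : ∀ c ∈ S, ∀ d ∈ S, NΘ (c + d) ≤ NΘ c + NΘ d)
    (hNsmul : ∀ (r : ℝ), ∀ c ∈ S, NΘ (r • c) = |r| * NΘ c)
    (hNdef : ∀ c ∈ S, NΘ c = 0 → c = 0)
    -- `S` is solid: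
    (hsolid : ∀ c ∈ S, ∀ d : ℕ → ℝ, (∀ i, |d i| ≤ |c i|) → d ∈ S ∧ NΘ d ≤ NΘ c)
    -- frame property with bounds `0 < A ≤ B`:
    (A B : ℝ) (hA : 0 < A) (hAB : A ≤ B)
    (hmem : ∀ f : X, (fun i => g i f) ∈ S)
    (hframe : ∀ f : X, A * ‖f‖ ≤ NΘ (fun i => g i f) ∧ NΘ (fun i => g i f) ≤ B * ‖f‖) :
    ∀ f : X, (A / B) * ‖f‖ ≤ NN g (fun i => g i f) :=
  lower_frame_from_solid_frame_general g S NΘ hsolid A B hA hAB hmem hframe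
end
end

section
/- Banach frames transfer from any larger solid space to Θ̃: let S be a linear subspace of the real sequences with a norm N_Θ which is solid (if c ∈ S and |d_i| ≤ |c_i| for all i then d ∈ S and N_Θ(d) ≤ N_Θ(c)), let B > 0 satisfy {g_i(f)}_{i∈ℕ} ∈ S and N_Θ({g_i(f)}) ≤ B·‖f‖ for all f ∈ X, and let V : S → X be a linear map with ‖V(c)‖ ≤ K·N_Θ(c) for all c ∈ S and V({g_i(f)}) = f for all f ∈ X. Then Θ̃ ⊆ S, ‖V(c)‖ ≤ K·B·N(c) for every c ∈ Θ̃, and V({g_i(f)}) = f for all f ∈ X; that is, V restricts to a reconstruction operator bounded with respect to N. -/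
noncomputable section

open Set

/-!
Every `c ∈ Θ̃` is dominated entrywise by the coefficient sequence `(g i f)` of some `f`, so
solidity puts `c` in `S` with `N_Θ(c) ≤ N_Θ(g f) ≤ B ‖f‖`. Hence `‖V c‖ ≤ K B ‖f‖` for every
`f ∈ M^c`, and taking the infimum over `M^c` gives `‖V c‖ ≤ K B N(c)`. Passing to the infimum
needs `K ≥ 0`, which reconstruction forces as soon as `X ≠ 0`; for `X = 0` both sides vanish.
-/

section

variable {X : Type*} [NormedAddCommGroup X] [NormedSpace ℝ X] (g : ℕ → X →L[ℝ] ℝ)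

theorem thetaT_subset_of_solid {S : Set (ℕ → ℝ)}
    (hsolid : ∀ c ∈ S, ∀ d : ℕ → ℝ, (∀ i, |d i| ≤ |c i|) → d ∈ S)
    (hmem : ∀ f : X, (fun i => g i f) ∈ S) : ThetaT g ⊆ S :=
  fun c ⟨f, hf⟩ => hsolid _ (hmem f) c hf

theorem NN_eq_zero_of_subsingleton [Subsingleton X] (c : ℕ → ℝ) : NN g c = 0 := by
  have hzero : ∀ x ∈ (fun f : X => ‖f‖) '' MSet g c, x = 0 := by
    rintro _ ⟨f, -, rfl⟩
    rw [Subsingleton.elim f 0]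
    exact norm_zero
  exact le_antisymm (Real.sInf_nonpos fun x hx => (hzero x hx).le)
    (Real.sInf_nonneg fun x hx => (hzero x hx).ge)

theorem le_mul_NN {c : ℕ → ℝ} {a t : ℝ} (ht : 0 ≤ t) (hc : c ∈ ThetaT g)
    (h : ∀ f ∈ MSet g c, a ≤ t * ‖f‖) : a ≤ t * NN g c := by
  rw [NN, ← smul_eq_mul, ← Real.sInf_smul_of_nonneg ht, ← Set.image_smul, Set.image_image]
  exact le_csInf (hc.image _) (Set.forall_mem_image.2 h)

end

theorem nonneg_of_solid {S : Set (ℕ → ℝ)} {NΘ : (ℕ → ℝ) → ℝ} (hN0 : NΘ 0 = 0)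
    (hsolid : ∀ c ∈ S, ∀ d : ℕ → ℝ, (∀ i, |d i| ≤ |c i|) → NΘ d ≤ NΘ c)
    {c : ℕ → ℝ} (hc : c ∈ S) : 0 ≤ NΘ c :=
  hN0 ▸ hsolid c hc 0 fun i => by simp

theorem nonneg_of_norm_le_mul_of_surjective {X : Type*} [NormedAddCommGroup X] [Nontrivial X]
    {S : Type*} {NΘ : S → ℝ} (hNnn : ∀ c, 0 ≤ NΘ c) (V : S → X) (K : ℝ)
    (hVbd : ∀ c, ‖V c‖ ≤ K * NΘ c) (hVsurj : Function.Surjective V) : 0 ≤ K := by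
  obtain ⟨f, hf⟩ := exists_ne (0 : X)
  obtain ⟨c, rfl⟩ := hVsurj f
  exact (pos_of_mul_pos_left ((norm_pos_iff.2 hf).trans_le (hVbd c)) (hNnn c)).le

theorem banach_frame_transfers_to_thetaT_general
    {X : Type*} [NormedAddCommGroup X] [NormedSpace ℝ X]
    (g : ℕ → X →L[ℝ] ℝ)
    (S : Submodule ℝ (ℕ → ℝ)) (NΘ : (ℕ → ℝ) → ℝ)
    -- `NΘ` is a norm on `S`:
    (hNsmul : ∀ (r : ℝ), ∀ c ∈ S, NΘ (r • c) = |r| * NΘ c)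
    -- `S` is solid:
    (hsolid : ∀ c ∈ S, ∀ d : ℕ → ℝ, (∀ i, |d i| ≤ |c i|) → d ∈ S ∧ NΘ d ≤ NΘ c)
    -- Bessel property with bound `B`:
    (B : ℝ) (hB : 0 < B)
    (hmem : ∀ f : X, (fun i => g i f) ∈ S)
    (hbd : ∀ f : X, NΘ (fun i => g i f) ≤ B * ‖f‖)
    -- bounded linear reconstruction operator `V : S → X`:
    (V : S →ₗ[ℝ] X) (K : ℝ)
    (hVbd : ∀ c : S, ‖V c‖ ≤ K * NΘ c)
    (hVrec : ∀ f : X, V ⟨fun i => g i f, hmem f⟩ = f) :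
    ∃ hsub : ThetaT g ⊆ S,
      (∀ c : ℕ → ℝ, ∀ hc : c ∈ ThetaT g, ‖V ⟨c, hsub hc⟩‖ ≤ K * B * NN g c) ∧
      (∀ f : X, V ⟨fun i => g i f, hmem f⟩ = f) := by
  have hsub : ThetaT g ⊆ S :=
    thetaT_subset_of_solid g (fun c hc d hd => (hsolid c hc d hd).1) hmem
  refine ⟨hsub, fun c hc => ?_, hVrec⟩
  rcases subsingleton_or_nontrivial X with _ | _
  · rw [Subsingleton.elim (V _) 0, NN_eq_zero_of_subsingleton, norm_zero, mul_zero]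
  have hNnn : ∀ c : S, 0 ≤ NΘ c := fun c =>
    nonneg_of_solid (by simpa using hNsmul 0 0 S.zero_mem)
      (fun c hc d hd => (hsolid c hc d hd).2) c.2
  have hK : 0 ≤ K := nonneg_of_norm_le_mul_of_surjective hNnn V K hVbd fun f => ⟨_, hVrec f⟩
  refine le_mul_NN g (mul_nonneg hK hB.le) hc fun f hf => ?_
  calc ‖V ⟨c, hsub hc⟩‖ ≤ K * NΘ c := hVbd _
    _ ≤ K * (B * ‖f‖) :=
      mul_le_mul_of_nonneg_left ((hsolid _ (hmem f) c hf).2.trans (hbd f)) hK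
    _ = K * B * ‖f‖ := by ring

theorem banach_frame_transfers_to_thetaT
    {X : Type*} [NormedAddCommGroup X] [NormedSpace ℝ X] [CompleteSpace X]
    (g : ℕ → X →L[ℝ] ℝ)
    (S : Submodule ℝ (ℕ → ℝ)) (NΘ : (ℕ → ℝ) → ℝ)
    -- `NΘ` is a norm on `S`:
    (hNadd : ∀ c ∈ S, ∀ d ∈ S, NΘ (c + d) ≤ NΘ c + NΘ d)
    (hNsmul : ∀ (r : ℝ), ∀ c ∈ S, NΘ (r • c) = |r| * NΘ c)
    (hNdef : ∀ c ∈ S, NΘ c = 0 → c = 0)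
    -- `S` is solid:
    (hsolid : ∀ c ∈ S, ∀ d : ℕ → ℝ, (∀ i, |d i| ≤ |c i|) → d ∈ S ∧ NΘ d ≤ NΘ c)
    -- Bessel property with bound `B`:
    (B : ℝ) (hB : 0 < B)
    (hmem : ∀ f : X, (fun i => g i f) ∈ S)
    (hbd : ∀ f : X, NΘ (fun i => g i f) ≤ B * ‖f‖)
    -- bounded linear reconstruction operator `V : S → X`:
    (V : S →ₗ[ℝ] X) (K : ℝ)
    (hVbd : ∀ c : S, ‖V c‖ ≤ K * NΘ c)
    (hVrec : ∀ f : X, V ⟨fun i => g i f, hmem f⟩ = f) :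
    ∃ hsub : ThetaT g ⊆ S,
      (∀ c : ℕ → ℝ, ∀ hc : c ∈ ThetaT g, ‖V ⟨c, hsub hc⟩‖ ≤ K * B * NN g c) ∧
      (∀ f : X, V ⟨fun i => g i f, hmem f⟩ = f) :=
  banach_frame_transfers_to_thetaT_general g S NΘ hNsmul hsolid B hB hmem hbd V K hVbd hVrec
end
end

section
/- Assume each g_i is nonzero and condition (A1) holds. For c ∈ Θ̃ and k ∈ ℕ write c^{(k)} for the sequence obtained from c by replacing its first k coordinates by 0 (so c^{(k)} ∈ Θ̃ by solidity). Then the canonical unit vectors form a Schauder-type basis for (Θ̃, N), i.e. N(c^{(n)}) → 0 as n → ∞ for every c ∈ Θ̃, if and only if condition (A2) holds: for every c ∈ Θ̃ and every ε > 0 there exist k ∈ ℕ and f ∈ M^{c^{(k)}} with ‖f‖ < ε. -/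
noncomputable section

open Set

/-- `c^{(k)}`: the sequence `c` with its first `k` coordinates replaced by `0`. -/
def trunc (c : ℕ → ℝ) (k : ℕ) : ℕ → ℝ :=
  fun i => if i < k then 0 else c i

lemma MSet_trunc_mono {X : Type*} [NormedAddCommGroup X] [NormedSpace ℝ X]
    (g : ℕ → X →L[ℝ] ℝ) (c : ℕ → ℝ) {k n : ℕ} (hkn : k ≤ n) :
    MSet g (trunc c k) ⊆ MSet g (trunc c n) := by
  intro f hf i
  refine le_trans ?_ (hf i)
  unfold trunc
  by_cases h : i < n
  · simp [h]
  · have hk : ¬ i < k := fun h' => h (h'.trans_le hkn)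
    simp [h, hk]

lemma NN_nonneg {X : Type*} [NormedAddCommGroup X] [NormedSpace ℝ X]
    (g : ℕ → X →L[ℝ] ℝ) (c : ℕ → ℝ) : 0 ≤ NN g c := by
  apply Real.sInf_nonneg
  rintro x ⟨f, -, rfl⟩
  exact norm_nonneg f

lemma NN_le {X : Type*} [NormedAddCommGroup X] [NormedSpace ℝ X]
    (g : ℕ → X →L[ℝ] ℝ) (c : ℕ → ℝ) {f : X} (hf : f ∈ MSet g c) :
    NN g c ≤ ‖f‖ := by
  have hb : BddBelow ((fun f => ‖f‖) '' MSet g c) := by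
    refine ⟨0, ?_⟩
    rintro x ⟨h, -, rfl⟩
    exact norm_nonneg h
  exact csInf_le hb ⟨f, hf, rfl⟩

theorem cb_iff_A2
    {X : Type*} [NormedAddCommGroup X] [NormedSpace ℝ X] [CompleteSpace X]
    (g : ℕ → X →L[ℝ] ℝ) (hg : ∀ i, g i ≠ 0)
    (hA1 : ∀ c ∈ ThetaT g, ∀ d ∈ ThetaT g, ∀ f ∈ MSet g c, ∀ h ∈ MSet g d,
      ∃ r ∈ MSet g (c + d), ‖r‖ ≤ ‖f‖ + ‖h‖) :
    (∀ c ∈ ThetaT g,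
        Filter.Tendsto (fun n => NN g (trunc c n)) Filter.atTop (nhds 0)) ↔
    (∀ c ∈ ThetaT g, ∀ ε > (0 : ℝ),
        ∃ k : ℕ, ∃ f ∈ MSet g (trunc c k), ‖f‖ < ε) := by
  have hsub : ∀ (c : ℕ → ℝ) (k : ℕ), MSet g c ⊆ MSet g (trunc c k) := by
    intro c k f hf i
    refine le_trans ?_ (hf i)
    unfold trunc
    by_cases h : i < k <;> simp [h]
  constructor
  · intro H c hc ε hε
    obtain ⟨n, hn⟩ := Metric.tendsto_atTop.1 (H c hc) ε hε
    have hn := hn n le_rfl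
    have hlt : NN g (trunc c n) < ε := by
      have := hn
      rw [Real.dist_eq, sub_zero, abs_of_nonneg (NN_nonneg g _)] at this
      exact this
    obtain ⟨f0, hf0⟩ := hc
    have hne : ((fun f => ‖f‖) '' MSet g (trunc c n)).Nonempty :=
      ⟨‖f0‖, f0, hsub c n hf0, rfl⟩
    obtain ⟨x, ⟨f, hf, rfl⟩, hx⟩ := exists_lt_of_csInf_lt hne hlt
    exact ⟨n, f, hf, hx⟩
  · intro H c hc
    rw [Metric.tendsto_atTop]
    intro ε hε
    obtain ⟨k, f, hf, hfε⟩ := H c hc ε hε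
    refine ⟨k, fun n hn => ?_⟩
    rw [Real.dist_eq, sub_zero, abs_of_nonneg (NN_nonneg g _)]
    exact lt_of_le_of_lt (NN_le g _ (MSet_trunc_mono g c hn hf)) hfε
end
end

section
/- The repetition system satisfies condition (A2): for every c ∈ Θ̃ and every ε > 0 there exist k ∈ ℕ and f ∈ M^{c^{(k)}} with ‖f‖ < ε, where c^{(k)} is the sequence obtained from c by replacing its first k coordinates by 0. -/
noncomputable section

open Set

/-- `M^c` for the repetition system `g i f = t i * ⟪f, e (σ i)⟫`. -/
def MSetH {H : Type*} [NormedAddCommGroup H] [InnerProductSpace ℝ H]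
    (e : ℕ → H) (σ : ℕ → ℕ) (t : ℕ → ℝ) (c : ℕ → ℝ) : Set H :=
  {f | ∀ i, |c i| ≤ |t i * (inner ℝ f (e (σ i)) : ℝ)|}

/-- `Θ̃`: scalar sequences with `M^c ≠ ∅`. -/
def ThetaTH {H : Type*} [NormedAddCommGroup H] [InnerProductSpace ℝ H]
    (e : ℕ → H) (σ : ℕ → ℕ) (t : ℕ → ℝ) : Set (ℕ → ℝ) :=
  {c | (MSetH e σ t c).Nonempty}

/-- `N(c) = inf{‖f‖ : f ∈ M^c}`. -/
def NNH {H : Type*} [NormedAddCommGroup H] [InnerProductSpace ℝ H]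
    (e : ℕ → H) (σ : ℕ → ℕ) (t : ℕ → ℝ) (c : ℕ → ℝ) : ℝ :=
  sInf ((fun f => ‖f‖) '' MSetH e σ t c)

/-!
Take `f₀ ∈ M^c` and remove from it its first `J` Fourier coefficients. The remainder has norm
`< ε` for `J` large, and it has the same coefficients as `f₀` along every `e j` with `j ≥ J`.
Since `σ i → ∞`, all `i ≥ k` have `σ i ≥ J` for some `k`, so the remainder still satisfies the
constraints of `M^c` at those indices, while the first `k` constraints of `M^{c^{(k)}}` are void.
-/

open Filter Topology

namespace HilbertBasis

variable {ι 𝕜 E : Type*} [RCLike 𝕜] [NormedAddCommGroup E] [InnerProductSpace 𝕜 E]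

theorem inner_sub_sum_repr_smul_of_notMem (b : HilbertBasis ι 𝕜 E) (f : E) {s : Finset ι}
    {j : ι} (hj : j ∉ s) :
    inner 𝕜 (f - ∑ i ∈ s, b.repr f i • b i) (b j) = inner 𝕜 f (b j) := by
  rw [inner_sub_left, sum_inner, Finset.sum_eq_zero, sub_zero]
  intro i hi
  rw [inner_smul_left, b.orthonormal.inner_eq_zero (ne_of_mem_of_not_mem hi hj), mul_zero]

theorem tendsto_norm_sub_sum_range_repr_smul (b : HilbertBasis ℕ 𝕜 E) (f : E) :
    Tendsto (fun n ↦ ‖f - ∑ i ∈ Finset.range n, b.repr f i • b i‖) atTop (𝓝 0) := by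
  simpa using ((tendsto_const_nhds (x := f)).sub (b.hasSum_repr f).tendsto_sum_nat).norm

end HilbertBasis

theorem mem_MSetH_trunc_of_inner_eq {H : Type*} [NormedAddCommGroup H]
    [InnerProductSpace ℝ H] {e : ℕ → H} {σ : ℕ → ℕ} {t c : ℕ → ℝ} {f g : H} {k : ℕ}
    (hf : f ∈ MSetH e σ t c) (hfg : ∀ i ≥ k, inner ℝ g (e (σ i)) = inner ℝ f (e (σ i))) :
    g ∈ MSetH e σ t (trunc c k) := by
  intro i
  by_cases hik : i < k
  · simp only [trunc, if_pos hik, abs_zero]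
    exact abs_nonneg _
  · simp only [trunc, if_neg hik, hfg i (not_lt.mp hik)]
    exact hf i

theorem repetition_system_A2_general
    {H : Type*} [NormedAddCommGroup H] [InnerProductSpace ℝ H]
    (e : HilbertBasis ℕ ℝ H) (σ : ℕ → ℕ) (t : ℕ → ℝ)
    (hσtend : Filter.Tendsto σ Filter.atTop Filter.atTop) :
    ∀ c ∈ ThetaTH e σ t, ∀ ε > (0 : ℝ),
      ∃ k : ℕ, ∃ f ∈ MSetH e σ t (trunc c k), ‖f‖ < ε := by
  rintro c ⟨f₀, hf₀⟩ ε hε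
  obtain ⟨J, hJ⟩ :=
    ((e.tendsto_norm_sub_sum_range_repr_smul f₀).eventually (gt_mem_nhds hε)).exists
  obtain ⟨k, hk⟩ := eventually_atTop.mp (hσtend.eventually_ge_atTop J)
  refine ⟨k, _, mem_MSetH_trunc_of_inner_eq hf₀ fun i hi ↦ ?_, hJ⟩
  exact e.inner_sub_sum_repr_smul_of_notMem f₀ (by simpa using hk i hi)

theorem repetition_system_A2
    {H : Type*} [NormedAddCommGroup H] [InnerProductSpace ℝ H] [CompleteSpace H]
    (e : HilbertBasis ℕ ℝ H) (σ : ℕ → ℕ) (t : ℕ → ℝ)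
    (hσmono : Monotone σ) (hσsurj : Function.Surjective σ)
    (hσtend : Filter.Tendsto σ Filter.atTop Filter.atTop)
    (ht : ∀ i, t i ≠ 0) :
    ∀ c ∈ ThetaTH e σ t, ∀ ε > (0 : ℝ),
      ∃ k : ℕ, ∃ f ∈ MSetH e σ t (trunc c k), ‖f‖ < ε :=
  repetition_system_A2_general e σ t hσtend
end
end

section
/- For every scalar sequence c with M^c ≠ ∅, the series ∑_{i=1}^∞ c_i·f_i converges in H, where f_i := (1/t_i)·e_{σ(i)} if i is the smallest index in its σ-fiber (i.e. σ(i') < σ(i) for all i' < i) and f_i := 0 otherwise. -/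
noncomputable section

open Set

open Classical in
/-- The reconstruction sequence: `f i = (1/t i) • e (σ i)` if `i` is the smallest
index in its `σ`-fiber, and `f i = 0` otherwise. -/
def fvec {H : Type*} [NormedAddCommGroup H] [InnerProductSpace ℝ H]
    (e : ℕ → H) (σ : ℕ → ℕ) (t : ℕ → ℝ) : ℕ → H :=
  fun i => if ∀ i' < i, σ i' < σ i then (t i)⁻¹ • e (σ i) else 0

/-!
On the record indices of `σ` (where `fvec` lives) `σ` is injective, so the vectors `e (σ i)`
there are orthonormal. For `f ∈ M^c` the coefficients `c i / t i` are dominated by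
`⟪e (σ i), f⟫`, which is square-summable by Bessel's inequality; in a complete space this makes
the orthogonal series summable.
-/

theorem Orthonormal.summable_smul_of_norm_le_inner {𝕜 E ι : Type*} [RCLike 𝕜]
    [NormedAddCommGroup E] [InnerProductSpace 𝕜 E] [CompleteSpace E] {v : ι → E}
    (hv : Orthonormal 𝕜 v) (x : E) {a : ι → 𝕜} (ha : ∀ i, ‖a i‖ ≤ ‖inner 𝕜 (v i) x‖) :
    Summable fun i => a i • v i :=
  (hv.orthogonalFamily.summable_iff_norm_sq_summable a).2 <|
    (hv.inner_products_summable x).of_nonneg_of_le (fun _ => by positivity)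
      fun i => pow_le_pow_left₀ (norm_nonneg _) (ha i) 2

/-- For monotone `σ` these are the first indices of the fibers of `σ`. -/
def recordIndices (σ : ℕ → ℕ) : Set ℕ :=
  {i | ∀ i' < i, σ i' < σ i}

theorem strictMonoOn_recordIndices (σ : ℕ → ℕ) : StrictMonoOn σ (recordIndices σ) :=
  fun _ _ _ hj hij => hj _ hij

theorem smul_fvec_eq_indicator {H : Type*} [NormedAddCommGroup H] [InnerProductSpace ℝ H]
    (e : ℕ → H) (σ : ℕ → ℕ) (t c : ℕ → ℝ) :
    (fun i => c i • fvec e σ t i) =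
      (recordIndices σ).indicator fun i => (c i * (t i)⁻¹) • e (σ i) := by
  ext i
  by_cases hi : i ∈ recordIndices σ
  · simp only [fvec, if_pos (show ∀ i' < i, σ i' < σ i from hi), indicator_of_mem hi, mul_smul]
  · simp [fvec, show ¬ ∀ i' < i, σ i' < σ i from hi, indicator_of_notMem hi]

theorem abs_mul_inv_le_abs_of_abs_le_abs_mul {c t y : ℝ} (h : |c| ≤ |t * y|) :
    |c * t⁻¹| ≤ |y| := by
  rcases eq_or_ne t 0 with rfl | ht
  · simp
  · rwa [abs_mul, abs_inv, ← div_eq_mul_inv, div_le_iff₀ (abs_pos.2 ht), mul_comm, ← abs_mul]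

theorem summable_smul_fvec_of_mem_MSetH {H : Type*} [NormedAddCommGroup H]
    [InnerProductSpace ℝ H] [CompleteSpace H] {e : ℕ → H} (he : Orthonormal ℝ e)
    (σ : ℕ → ℕ) (t : ℕ → ℝ) {c : ℕ → ℝ} {f : H} (hf : f ∈ MSetH e σ t c) :
    Summable fun i => c i • fvec e σ t i := by
  rw [smul_fvec_eq_indicator, ← summable_subtype_iff_indicator]
  have hv : Orthonormal ℝ fun i : recordIndices σ => e (σ i) :=
    he.comp _ (strictMonoOn_recordIndices σ).injOn.injective
  refine hv.summable_smul_of_norm_le_inner f fun i => ?_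
  rw [Real.norm_eq_abs, Real.norm_eq_abs, real_inner_comm]
  exact abs_mul_inv_le_abs_of_abs_le_abs_mul (hf i)

theorem series_converges_on_thetaT_general
    {H : Type*} [NormedAddCommGroup H] [InnerProductSpace ℝ H] [CompleteSpace H]
    (e : HilbertBasis ℕ ℝ H) (σ : ℕ → ℕ) (t : ℕ → ℝ) :
    ∀ c : ℕ → ℝ, (MSetH e σ t c).Nonempty →
      ∃ L : H, Filter.Tendsto
        (fun n => ∑ i ∈ Finset.range n, c i • fvec (⇑e) σ t i)
        Filter.atTop (nhds L) := fun _ ⟨_, hf⟩ =>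
  ⟨_, (summable_smul_fvec_of_mem_MSetH e.orthonormal σ t hf).hasSum.tendsto_sum_nat⟩

theorem series_converges_on_thetaT
    {H : Type*} [NormedAddCommGroup H] [InnerProductSpace ℝ H] [CompleteSpace H]
    (e : HilbertBasis ℕ ℝ H) (σ : ℕ → ℕ) (t : ℕ → ℝ)
    (hσmono : Monotone σ) (hσsurj : Function.Surjective σ)
    (hσtend : Filter.Tendsto σ Filter.atTop Filter.atTop)
    (ht : ∀ i, t i ≠ 0) :
    ∀ c : ℕ → ℝ, (MSetH e σ t c).Nonempty →
      ∃ L : H, Filter.Tendsto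
        (fun n => ∑ i ∈ Finset.range n, c i • fvec (⇑e) σ t i)
        Filter.atTop (nhds L) :=
  series_converges_on_thetaT_general e σ t
end
end

section
/- The repetition system satisfies condition (A1^s) at every level s: for all scalar sequences c, d with M_s^c ≠ ∅ and M_s^d ≠ ∅, and for all f ∈ M_s^c and h ∈ M_s^d, there exists r ∈ M_s^{c+d} with ‖r‖_s ≤ ‖f‖_s + ‖h‖_s. -/
/-!
Take `r` with coefficients `⟪r, e j⟫ = |⟪f, e j⟫| + |⟪h, e j⟫|`, which exists since this sequence
is square-summable. Then `|g_i r| = |g_i f| + |g_i h| ≥ |c i| + |d i| ≥ |c i + d i|`, and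
Minkowski's inequality in the weighted `ℓ²` space defining `‖·‖_s` gives
`‖r‖_s ≤ ‖|f|‖_s + ‖|h|‖_s = ‖f‖_s + ‖h‖_s`.
-/

noncomputable section

open Set

/-- The space `X_s = {f : ∑ i, a_{i,s}² ⟪f,e_i⟩² < ∞}` (as a subset of `X₀`). -/
def Xs {X₀ : Type*} [NormedAddCommGroup X₀] [InnerProductSpace ℝ X₀]
    (e : ℕ → X₀) (a : ℕ → ℕ → ℝ) (s : ℕ) : Set X₀ :=
  {f | Summable fun i => (a i s * (inner ℝ f (e i) : ℝ)) ^ 2}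

/-- The inner product `⟪f,h⟫_s = ∑ i, a_{i,s}² ⟪f,e_i⟩₀ ⟪h,e_i⟩₀`. -/
def innerS {X₀ : Type*} [NormedAddCommGroup X₀] [InnerProductSpace ℝ X₀]
    (e : ℕ → X₀) (a : ℕ → ℕ → ℝ) (s : ℕ) (f h : X₀) : ℝ :=
  ∑' i, (a i s) ^ 2 * (inner ℝ f (e i) : ℝ) * (inner ℝ h (e i) : ℝ)

/-- The norm `‖f‖_s = (∑ i, a_{i,s}² ⟪f,e_i⟩₀²)^(1/2)`. -/
def normS {X₀ : Type*} [NormedAddCommGroup X₀] [InnerProductSpace ℝ X₀]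
    (e : ℕ → X₀) (a : ℕ → ℕ → ℝ) (s : ℕ) (f : X₀) : ℝ :=
  Real.sqrt (∑' i, (a i s * (inner ℝ f (e i) : ℝ)) ^ 2)

/-- `M_s^c`: the set of `f ∈ X_s` with `|c i| ≤ |g i (f)| = |t i * ⟪f, e (σ i)⟫₀|`. -/
def MSetS {X₀ : Type*} [NormedAddCommGroup X₀] [InnerProductSpace ℝ X₀]
    (e : ℕ → X₀) (a : ℕ → ℕ → ℝ) (σ : ℕ → ℕ) (t : ℕ → ℝ) (s : ℕ) (c : ℕ → ℝ) :
    Set X₀ :=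
  {f | f ∈ Xs e a s ∧ ∀ i, |c i| ≤ |t i * (inner ℝ f (e (σ i)) : ℝ)|}

open scoped InnerProductSpace

theorem sqrt_tsum_sq_mul_abs_add_abs_le {ι : Type*} (w x y : ι → ℝ)
    (hx : Summable fun i => (w i * x i) ^ 2) (hy : Summable fun i => (w i * y i) ^ 2) :
    (Summable fun i => (w i * (|x i| + |y i|)) ^ 2) ∧
      √(∑' i, (w i * (|x i| + |y i|)) ^ 2) ≤
        √(∑' i, (w i * x i) ^ 2) + √(∑' i, (w i * y i) ^ 2) := by
  have hsq : ∀ u : ℝ, u ^ (2 : ℝ) = u ^ 2 := fun u => Real.rpow_ofNat u 2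
  have hsum : ∀ i, (|w i * x i| + |w i * y i|) ^ 2 = (w i * (|x i| + |y i|)) ^ 2 := by
    intro i
    rw [abs_mul, abs_mul, ← mul_add, mul_pow, mul_pow, sq_abs]
  have key := Real.Lp_add_le_tsum_of_nonneg (p := 2) one_le_two
    (fun i => abs_nonneg (w i * x i)) (fun i => abs_nonneg (w i * y i))
    (by simpa only [hsq, sq_abs] using hx) (by simpa only [hsq, sq_abs] using hy)
  simp only [hsq, sq_abs, hsum, ← Real.sqrt_eq_rpow] at key
  exact key

namespace HilbertBasis

variable {ι E : Type*} [NormedAddCommGroup E] [InnerProductSpace ℝ E] (e : HilbertBasis ι ℝ E)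

theorem exists_inner_eq_of_summable_sq {b : ι → ℝ}
    (hb : Summable fun i => b i ^ 2) : ∃ r : E, ∀ i, ⟪r, e i⟫_ℝ = b i := by
  have hmem : Memℓp b 2 := memℓp_gen <| by simpa [Real.rpow_ofNat] using hb
  refine ⟨e.repr.symm ⟨b, hmem⟩, fun i => ?_⟩
  rw [real_inner_comm, ← e.repr_apply_apply, LinearIsometryEquiv.apply_symm_apply]

theorem summable_inner_sq (f : E) : Summable fun i => ⟪f, e i⟫_ℝ ^ 2 := by
  simpa only [real_inner_comm f, sq] using e.summable_inner_mul_inner f f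

end HilbertBasis

theorem abs_add_le_abs_mul_abs_add_abs {c d t x y : ℝ}
    (hc : |c| ≤ |t * x|) (hd : |d| ≤ |t * y|) : |c + d| ≤ |t * (|x| + |y|)| := calc
  |c + d| ≤ |c| + |d| := abs_add_le c d
  _ ≤ |t * x| + |t * y| := add_le_add hc hd
  _ = |t * (|x| + |y|)| := by
    rw [abs_mul, abs_mul, abs_mul, abs_of_nonneg (by positivity : 0 ≤ |x| + |y|), mul_add]

theorem repetition_system_A1s_general
    {X₀ : Type*} [NormedAddCommGroup X₀] [InnerProductSpace ℝ X₀]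
    (e : HilbertBasis ℕ ℝ X₀) (a : ℕ → ℕ → ℝ)
    (σ : ℕ → ℕ) (t : ℕ → ℝ) :
    ∀ s : ℕ, ∀ c d : ℕ → ℝ,
      (MSetS (⇑e) a σ t s c).Nonempty → (MSetS (⇑e) a σ t s d).Nonempty →
      ∀ f ∈ MSetS (⇑e) a σ t s c, ∀ h ∈ MSetS (⇑e) a σ t s d,
        ∃ r ∈ MSetS (⇑e) a σ t s (c + d),
          normS (⇑e) a s r ≤ normS (⇑e) a s f + normS (⇑e) a s h := by
  intro s c d _ _ f ⟨hfX, hfc⟩ h ⟨hhX, hhd⟩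
  obtain ⟨hsum_s, hnorm⟩ := sqrt_tsum_sq_mul_abs_add_abs_le (a · s) _ _ hfX hhX
  obtain ⟨hsum_0, -⟩ := sqrt_tsum_sq_mul_abs_add_abs_le 1 (⟪f, e ·⟫_ℝ) (⟪h, e ·⟫_ℝ)
    (by simpa using e.summable_inner_sq f) (by simpa using e.summable_inner_sq h)
  obtain ⟨r, hr⟩ := e.exists_inner_eq_of_summable_sq (by simpa using hsum_0)
  refine ⟨r, ⟨?_, fun i => ?_⟩, ?_⟩
  · simpa only [Xs, Set.mem_ofPred_eq, hr] using hsum_s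
  · rw [hr]
    exact abs_add_le_abs_mul_abs_add_abs (hfc i) (hhd i)
  · simpa only [normS, hr] using hnorm

theorem repetition_system_A1s
    {X₀ : Type*} [NormedAddCommGroup X₀] [InnerProductSpace ℝ X₀] [CompleteSpace X₀]
    (e : HilbertBasis ℕ ℝ X₀) (a : ℕ → ℕ → ℝ)
    (ha0 : ∀ i, a i 0 = 1) (ha1 : ∀ i s, 1 ≤ a i s)
    (hamono : ∀ i s, a i s ≤ a i (s + 1))
    (σ : ℕ → ℕ) (t : ℕ → ℝ)
    (hσmono : Monotone σ) (hσsurj : Function.Surjective σ)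
    (hσtend : Filter.Tendsto σ Filter.atTop Filter.atTop)
    (ht : ∀ i, t i ≠ 0) :
    ∀ s : ℕ, ∀ c d : ℕ → ℝ,
      (MSetS (⇑e) a σ t s c).Nonempty → (MSetS (⇑e) a σ t s d).Nonempty →
      ∀ f ∈ MSetS (⇑e) a σ t s c, ∀ h ∈ MSetS (⇑e) a σ t s d,
        ∃ r ∈ MSetS (⇑e) a σ t s (c + d),
          normS (⇑e) a s r ≤ normS (⇑e) a s f + normS (⇑e) a s h :=
  repetition_system_A1s_general e a σ t
end
end

section
/- The repetition system satisfies condition (A2^s) at every level s: for every scalar sequence c with M_s^c ≠ ∅ and every ε > 0 there exist k ∈ ℕ and f ∈ M_s^{c^{(k)}} with ‖f‖_s < ε, where c^{(k)} is the sequence obtained from c by replacing its first k coordinates by 0. -/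
noncomputable section

open Set

/-!
Removing from a point `f ∈ M_s^c` its coordinates along `e 0, …, e (σ k - 1)` does not change
`g i f` for `i ≥ k`, because `σ` is monotone; so the result lies in `M_s^{c^{(k)}}`. Its `s`-norm
is the square root of a tail of the convergent series defining `‖f‖_s`, and tends to `0` since
`σ k → ∞`.
-/

open Filter Topology

section Tail

variable {G : Type*} [AddCommGroup G] [TopologicalSpace G] [IsTopologicalAddGroup G] {g : ℕ → G}

theorem Summable.ite_lt_zero (hg : Summable g) (N : ℕ) :
    Summable fun i => if i < N then 0 else g i :=
  (summable_nat_add_iff N).1 <| by simpa using (summable_nat_add_iff N).2 hg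

theorem Summable.tsum_ite_lt_zero [T2Space G] (hg : Summable g) (N : ℕ) :
    ∑' i, (if i < N then 0 else g i) = ∑' i, g (i + N) := by
  rw [← (hg.ite_lt_zero N).sum_add_tsum_nat_add N, Finset.sum_eq_zero fun i hi => by
    simp [Finset.mem_range.1 hi]]
  simp

end Tail

section DropCoeffs

variable {E : Type*} [NormedAddCommGroup E] [InnerProductSpace ℝ E] {v : ℕ → E}

def dropCoeffs (v : ℕ → E) (N : ℕ) (x : E) : E :=
  x - ∑ m ∈ Finset.range N, inner ℝ x (v m) • v m

theorem Orthonormal.inner_dropCoeffs (hv : Orthonormal ℝ v) (N : ℕ) (x : E) (j : ℕ) :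
    inner ℝ (dropCoeffs v N x) (v j) = if j < N then 0 else inner ℝ x (v j) := by
  simp only [dropCoeffs, inner_sub_left, sum_inner, real_inner_smul_left,
    orthonormal_iff_ite.mp hv, mul_ite, mul_one, mul_zero, Finset.sum_ite_eq', Finset.mem_range]
  split_ifs <;> simp

theorem Orthonormal.sq_mul_inner_dropCoeffs (hv : Orthonormal ℝ v) (w : ℝ) (N : ℕ) (x : E)
    (i : ℕ) : (w * inner ℝ (dropCoeffs v N x) (v i)) ^ 2 =
      if i < N then 0 else (w * inner ℝ x (v i)) ^ 2 := by
  rw [hv.inner_dropCoeffs]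
  split_ifs <;> simp

variable {a : ℕ → ℕ → ℝ} {s : ℕ} {x : E}

theorem Orthonormal.dropCoeffs_mem_Xs (hv : Orthonormal ℝ v) (hx : x ∈ Xs v a s) (N : ℕ) :
    dropCoeffs v N x ∈ Xs v a s := by
  simpa only [Xs, mem_ofPred_eq, hv.sq_mul_inner_dropCoeffs] using hx.ite_lt_zero N

theorem Orthonormal.normS_dropCoeffs (hv : Orthonormal ℝ v) (hx : x ∈ Xs v a s) (N : ℕ) :
    normS v a s (dropCoeffs v N x) = √(∑' i, (a (i + N) s * inner ℝ x (v (i + N))) ^ 2) := by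
  simp only [normS, hv.sq_mul_inner_dropCoeffs, Summable.tsum_ite_lt_zero hx N]

theorem Orthonormal.tendsto_normS_dropCoeffs (hv : Orthonormal ℝ v) (hx : x ∈ Xs v a s) :
    Tendsto (fun N => normS v a s (dropCoeffs v N x)) atTop (𝓝 0) := by
  simp only [hv.normS_dropCoeffs hx]
  simpa using (tendsto_sum_nat_add fun i => (a i s * inner ℝ x (v i)) ^ 2).sqrt

theorem Orthonormal.dropCoeffs_mem_MSetS (hv : Orthonormal ℝ v) {σ : ℕ → ℕ} (hσ : Monotone σ)
    {t c : ℕ → ℝ} (hx : x ∈ MSetS v a σ t s c) (k : ℕ) :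
    dropCoeffs v (σ k) x ∈ MSetS v a σ t s (trunc c k) := by
  refine ⟨hv.dropCoeffs_mem_Xs hx.1 _, fun i => ?_⟩
  rw [hv.inner_dropCoeffs]
  by_cases hi : i < k
  · simp [trunc, hi]
  · have hσi : ¬σ i < σ k := not_lt.2 (hσ (not_lt.1 hi))
    simpa [trunc, hi, hσi] using hx.2 i

end DropCoeffs

theorem repetition_system_A2s_general
    {X₀ : Type*} [NormedAddCommGroup X₀] [InnerProductSpace ℝ X₀]
    (e : HilbertBasis ℕ ℝ X₀) (a : ℕ → ℕ → ℝ)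
    (σ : ℕ → ℕ) (t : ℕ → ℝ)
    (hσmono : Monotone σ)
    (hσtend : Filter.Tendsto σ Filter.atTop Filter.atTop) :
    ∀ s : ℕ, ∀ c : ℕ → ℝ, (MSetS (⇑e) a σ t s c).Nonempty →
      ∀ ε > (0 : ℝ), ∃ k : ℕ, ∃ f ∈ MSetS (⇑e) a σ t s (trunc c k),
        normS (⇑e) a s f < ε := by
  intro s c ⟨x, hx⟩ ε hε
  obtain ⟨k, hk⟩ :=
    (((e.orthonormal.tendsto_normS_dropCoeffs hx.1).comp hσtend).eventually_lt_const hε).exists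
  exact ⟨k, _, e.orthonormal.dropCoeffs_mem_MSetS hσmono hx k, hk⟩

theorem repetition_system_A2s
    {X₀ : Type*} [NormedAddCommGroup X₀] [InnerProductSpace ℝ X₀] [CompleteSpace X₀]
    (e : HilbertBasis ℕ ℝ X₀) (a : ℕ → ℕ → ℝ)
    (ha0 : ∀ i, a i 0 = 1) (ha1 : ∀ i s, 1 ≤ a i s)
    (hamono : ∀ i s, a i s ≤ a i (s + 1))
    (σ : ℕ → ℕ) (t : ℕ → ℝ)
    (hσmono : Monotone σ) (hσsurj : Function.Surjective σ)
    (hσtend : Filter.Tendsto σ Filter.atTop Filter.atTop)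
    (ht : ∀ i, t i ≠ 0) :
    ∀ s : ℕ, ∀ c : ℕ → ℝ, (MSetS (⇑e) a σ t s c).Nonempty →
      ∀ ε > (0 : ℝ), ∃ k : ℕ, ∃ f ∈ MSetS (⇑e) a σ t s (trunc c k),
        normS (⇑e) a s f < ε :=
  repetition_system_A2s_general e a σ t hσmono hσtend
end
end
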